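/- arXiv:2304.00223 — 2 statements merged into one kernel-verified Lean document; each statement's English description precedes it below -/
import Mathlib

section
/- Let ρ > 0, let H ∈ ℂ^{N×M} be any matrix, fix j ∈ {1,…,M}, let H_j ∈ ℂ^{N×(M−1)} be H with its j-th column removed, and set Q = (ρ I_N + H H^H)^{-1} and Q_j = (ρ I_N + H_j H_j^H)^{-1}. Then for every matrix Ψ ∈ ℂ^{N×N}, |Tr(Ψ (Q − Q_j))| ≤ ‖Ψ‖/ρ, where ‖·‖ denotes the spectral norm. -/
noncomputable section

open MeasureTheory ProbabilityTheory Matrix Filter Finset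
open scoped ENNReal NNReal Matrix BoundedContinuousFunction Topology ComplexOrder

namespace HoloMIMO

variable {Ω : Type*} [MeasurableSpace Ω]

/-- Spectral (ℓ²→ℓ²) operator norm of a complex rectangular matrix. -/
def specNorm {m n : ℕ} (A : Matrix (Fin m) (Fin n) ℂ) : ℝ :=
  ‖LinearMap.toContinuousLinearMap (Matrix.toEuclideanLin A)‖

/-- Squared Euclidean norm of a complex vector. -/
def vecNormSq {n : ℕ} (a : Fin n → ℂ) : ℝ := ∑ i, Complex.normSq (a i)

/-- The sesquilinear form `aᴴ B b`. -/
def bilin {n : ℕ} (B : Matrix (Fin n) (Fin n) ℂ) (a b : Fin n → ℂ) : ℂ :=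
  dotProduct (star a) (B.mulVec b)

/-- The quadratic form `aᴴ B a`. -/
def quad {n : ℕ} (B : Matrix (Fin n) (Fin n) ℂ) (a : Fin n → ℂ) : ℂ := bilin B a a

/-- The `k`-th column of a matrix, as a vector. -/
def colv {m : ℕ} {n : Type*} (A : Matrix (Fin m) n ℂ) (k : n) : Fin m → ℂ := fun i => A i k

/-- Entrywise square root of a real matrix, viewed as a complex matrix. -/
def entrySqrt {m n : ℕ} (S : Matrix (Fin m) (Fin n) ℝ) : Matrix (Fin m) (Fin n) ℂ :=
  Matrix.of fun i j => (Real.sqrt (S i j) : ℂ)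

/-- The channel `H = A + Σ^{∘1/2} ⊙ X`. -/
def chan {N M : ℕ} (A : Matrix (Fin N) (Fin M) ℂ) (S : Matrix (Fin N) (Fin M) ℝ)
    (X : Matrix (Fin N) (Fin M) ℂ) : Matrix (Fin N) (Fin M) ℂ :=
  A + Matrix.hadamard (entrySqrt S) X

/-- `D_j` : the N×N diagonal matrix with the `j`-th column of `Σ` on the diagonal. -/
def Dcol {N M : ℕ} (S : Matrix (Fin N) (Fin M) ℝ) (j : Fin M) : Matrix (Fin N) (Fin N) ℂ :=
  Matrix.diagonal fun i => (S i j : ℂ)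

/-- `D̃_i` : the M×M diagonal matrix with the `i`-th row of `Σ` on the diagonal. -/
def Drow {N M : ℕ} (S : Matrix (Fin N) (Fin M) ℝ) (i : Fin N) : Matrix (Fin M) (Fin M) ℂ :=
  Matrix.diagonal fun j => (S i j : ℂ)

/-- The resolvent `Q = (ρ I_N + H Hᴴ)⁻¹`. -/
def Qmat {N : ℕ} {m : Type*} [Fintype m] (ρ : ℝ) (H : Matrix (Fin N) m ℂ) :
    Matrix (Fin N) (Fin N) ℂ :=
  ((ρ : ℂ) • (1 : Matrix (Fin N) (Fin N) ℂ) + H * Hᴴ)⁻¹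

/-- The co-resolvent `Q̃ = (ρ I_M + Hᴴ H)⁻¹`. -/
def Qtmat {N M : ℕ} (ρ : ℝ) (H : Matrix (Fin N) (Fin M) ℂ) : Matrix (Fin M) (Fin M) ℂ :=
  ((ρ : ℂ) • (1 : Matrix (Fin M) (Fin M) ℂ) + Hᴴ * H)⁻¹

/-- `H` with its `j`-th column deleted (columns indexed by the remaining column indices). -/
def delCol {N M : ℕ} (H : Matrix (Fin N) (Fin M) ℂ) (j : Fin M) :
    Matrix (Fin N) {k : Fin M // k ≠ j} ℂ :=
  Matrix.of fun i k => H i k.1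

/-- The rank-one-perturbed resolvent `Q_j = (ρ I_N + H_j H_jᴴ)⁻¹`. -/
def Qjmat {N M : ℕ} (ρ : ℝ) (H : Matrix (Fin N) (Fin M) ℂ) (j : Fin M) :
    Matrix (Fin N) (Fin N) ℂ :=
  Qmat ρ (delCol H j)

/-- Mutual information `C(ρ) = log det(I + ρ⁻¹ H Hᴴ)`. -/
def MI {N M : ℕ} (ρ : ℝ) (H : Matrix (Fin N) (Fin M) ℂ) : ℝ :=
  Real.log ‖(1 + (ρ : ℂ)⁻¹ • (H * Hᴴ)).det‖

/-- `ψ = diag((ρ(1+δ̃_i))⁻¹)`. -/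
def psiMat {N : ℕ} (ρ : ℝ) (δt : Fin N → ℝ) : Matrix (Fin N) (Fin N) ℂ :=
  Matrix.diagonal fun i => (((ρ * (1 + δt i))⁻¹ : ℝ) : ℂ)

/-- `ψ̃ = diag((ρ(1+δ_j))⁻¹)`. -/
def psitMat {M : ℕ} (ρ : ℝ) (δ : Fin M → ℝ) : Matrix (Fin M) (Fin M) ℂ :=
  Matrix.diagonal fun j => (((ρ * (1 + δ j))⁻¹ : ℝ) : ℂ)

/-- `T = (ψ⁻¹ + ρ A ψ̃ Aᴴ)⁻¹`. -/
def Tmat {N M : ℕ} (ρ : ℝ) (A : Matrix (Fin N) (Fin M) ℂ) (δ : Fin M → ℝ) (δt : Fin N → ℝ) :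
    Matrix (Fin N) (Fin N) ℂ :=
  ((psiMat ρ δt)⁻¹ + (ρ : ℂ) • (A * psitMat ρ δ * Aᴴ))⁻¹

/-- `T̃ = (ψ̃⁻¹ + ρ Aᴴ ψ A)⁻¹`. -/
def Ttmat {N M : ℕ} (ρ : ℝ) (A : Matrix (Fin N) (Fin M) ℂ) (δ : Fin M → ℝ) (δt : Fin N → ℝ) :
    Matrix (Fin M) (Fin M) ℂ :=
  ((psitMat ρ δ)⁻¹ + (ρ : ℂ) • (Aᴴ * psiMat ρ δt * A))⁻¹

/-- `(δ, δ̃)` is a (the) nonnegative solution of the canonical system of `M + N` equations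
`δ_j = (1/M) Tr(D_j T)`, `δ̃_i = (1/M) Tr(D̃_i T̃)`. -/
def DESolution {N M : ℕ} (ρ : ℝ) (A : Matrix (Fin N) (Fin M) ℂ) (S : Matrix (Fin N) (Fin M) ℝ)
    (δ : Fin M → ℝ) (δt : Fin N → ℝ) : Prop :=
  (∀ j, 0 ≤ δ j) ∧ (∀ i, 0 ≤ δt i) ∧
  (∀ j, (δ j : ℂ) = (M : ℂ)⁻¹ * (Dcol S j * Tmat ρ A δ δt).trace) ∧
  (∀ i, (δt i : ℂ) = (M : ℂ)⁻¹ * (Drow S i * Ttmat ρ A δ δt).trace)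

/-- `t̃_{jj}`, the `j`-th diagonal entry of `T̃` (a real number). -/
def ttdiag {N M : ℕ} (ρ : ℝ) (A : Matrix (Fin N) (Fin M) ℂ) (δ : Fin M → ℝ) (δt : Fin N → ℝ)
    (j : Fin M) : ℝ := (Ttmat ρ A δ δt j j).re

/-- `Π_{jk} = a_kᴴ T D_j T a_k / (M (1+δ_k)²)`. -/
def PiMat {N M : ℕ} (ρ : ℝ) (A : Matrix (Fin N) (Fin M) ℂ) (S : Matrix (Fin N) (Fin M) ℝ)
    (δ : Fin M → ℝ) (δt : Fin N → ℝ) : Matrix (Fin M) (Fin M) ℝ :=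
  Matrix.of fun j k =>
    (bilin (Tmat ρ A δ δt * Dcol S j * Tmat ρ A δ δt) (colv A k) (colv A k)).re /
      (M * (1 + δ k) ^ 2)

/-- `Ξ_{jk} = (a_kᴴ T a_j)(a_jᴴ T a_k)/((1+δ_j)²(1+δ_k)²)` for `j ≠ k`, and `Ξ_{jj} = 0`. -/
def XiMat {N M : ℕ} (ρ : ℝ) (A : Matrix (Fin N) (Fin M) ℂ) (δ : Fin M → ℝ) (δt : Fin N → ℝ) :
    Matrix (Fin M) (Fin M) ℝ :=
  Matrix.of fun j k =>
    if j = k then 0 else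
      ((bilin (Tmat ρ A δ δt) (colv A k) (colv A j)) *
        (bilin (Tmat ρ A δ δt) (colv A j) (colv A k))).re /
        ((1 + δ j) ^ 2 * (1 + δ k) ^ 2)

/-- `Γ_{jk} = Tr(D_j T D_k T)/M²`. -/
def GammaMat {N M : ℕ} (ρ : ℝ) (A : Matrix (Fin N) (Fin M) ℂ) (S : Matrix (Fin N) (Fin M) ℝ)
    (δ : Fin M → ℝ) (δt : Fin N → ℝ) : Matrix (Fin M) (Fin M) ℝ :=
  Matrix.of fun j k =>
    ((Dcol S j * Tmat ρ A δ δt * Dcol S k * Tmat ρ A δ δt).trace).re / (M : ℝ) ^ 2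

/-- `Λ̃ = ρ² diag(t̃_{11}², …, t̃_{MM}²)`. -/
def LambdaMat {N M : ℕ} (ρ : ℝ) (A : Matrix (Fin N) (Fin M) ℂ) (δ : Fin M → ℝ)
    (δt : Fin N → ℝ) : Matrix (Fin M) (Fin M) ℝ :=
  Matrix.diagonal fun j => ρ ^ 2 * (ttdiag ρ A δ δt j) ^ 2

/-- The 2M×2M block matrix `B_M = [[Π, Γ], [Ξ + Λ̃, Πᵀ]]`. -/
def BMat {N M : ℕ} (ρ : ℝ) (A : Matrix (Fin N) (Fin M) ℂ) (S : Matrix (Fin N) (Fin M) ℝ)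
    (δ : Fin M → ℝ) (δt : Fin N → ℝ) : Matrix (Fin M ⊕ Fin M) (Fin M ⊕ Fin M) ℝ :=
  Matrix.fromBlocks (PiMat ρ A S δ δt) (GammaMat ρ A S δ δt)
    (XiMat ρ A δ δt + LambdaMat ρ A δ δt) (PiMat ρ A S δ δt)ᵀ

/-- `V_M(ρ) = − log det(I_{2M} − B_M)`. -/
def VM {N M : ℕ} (ρ : ℝ) (A : Matrix (Fin N) (Fin M) ℂ) (S : Matrix (Fin N) (Fin M) ℝ)
    (δ : Fin M → ℝ) (δt : Fin N → ℝ) : ℝ :=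
  - Real.log ((1 - BMat ρ A S δ δt).det)

/-- The entries of `X` are independent circularly-symmetric complex Gaussians: real and
imaginary parts of all entries are jointly independent, each centered Gaussian with
variance `v`. -/
def IIDcgauss {N M : ℕ} (μ : Measure Ω) (X : Ω → Matrix (Fin N) (Fin M) ℂ) (v : ℝ≥0) : Prop :=
  (∀ i j, Measure.map (fun ω => (X ω i j).re) μ = gaussianReal 0 v ∧
      Measure.map (fun ω => (X ω i j).im) μ = gaussianReal 0 v) ∧
  iIndepFun
    (fun (p : (Fin N × Fin M) × Bool) ω =>
      if p.2 then (X ω p.1.1 p.1.2).re else (X ω p.1.1 p.1.2).im) μ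

/-- The entries of the vector `x` are independent circularly-symmetric complex Gaussians,
the real and imaginary part of each entry being centered Gaussian of variance `v`. -/
def IIDcgaussVec {N : ℕ} (μ : Measure Ω) (x : Ω → Fin N → ℂ) (v : ℝ≥0) : Prop :=
  (∀ i, Measure.map (fun ω => (x ω i).re) μ = gaussianReal 0 v ∧
      Measure.map (fun ω => (x ω i).im) μ = gaussianReal 0 v) ∧
  iIndepFun
    (fun (p : Fin N × Bool) ω => if p.2 then (x ω p.1).re else (x ω p.1).im) μ

/-- `F_j` : the σ-field generated by the columns of `X` of index `≥ j`. -/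
def colSigma {N M : ℕ} (X : Ω → Matrix (Fin N) (Fin M) ℂ) (j : ℕ) : MeasurableSpace Ω :=
  MeasurableSpace.comap
    (fun ω => fun p : {k : Fin M // j ≤ (k : ℕ)} × Fin N => X ω p.2 p.1.1) inferInstance

/-- The random variable `ζ_j`. -/
def zeta {N M : ℕ} (ρ : ℝ) (A : Matrix (Fin N) (Fin M) ℂ) (S : Matrix (Fin N) (Fin M) ℝ)
    (H : Matrix (Fin N) (Fin M) ℂ) (j : Fin M) : ℝ :=
  ((quad (Qjmat ρ H j) (colv H j)).re - (M : ℝ)⁻¹ * ((Dcol S j * Qjmat ρ H j).trace).re -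
      (quad (Qjmat ρ H j) (colv A j)).re) /
    (1 + (M : ℝ)⁻¹ * ((Dcol S j * Qjmat ρ H j).trace).re + (quad (Qjmat ρ H j) (colv A j)).re)

/-- The random variable `e_j = h_jᴴ Q_j h_j − a_jᴴ Q_j a_j − (1/M) Tr(D_j Q_j)`. -/
def eQ {N M : ℕ} (ρ : ℝ) (A : Matrix (Fin N) (Fin M) ℂ) (S : Matrix (Fin N) (Fin M) ℝ)
    (H : Matrix (Fin N) (Fin M) ℂ) (j : Fin M) : ℝ :=
  (quad (Qjmat ρ H j) (colv H j)).re - (quad (Qjmat ρ H j) (colv A j)).re -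
    (M : ℝ)⁻¹ * ((Dcol S j * Qjmat ρ H j).trace).re

/-- Entrywise conditional expectation of a random matrix. -/
def condexpMat {N : ℕ} (μ : Measure Ω) (m : MeasurableSpace Ω)
    (F : Ω → Matrix (Fin N) (Fin N) ℂ) : Ω → Matrix (Fin N) (Fin N) ℂ :=
  fun ω => Matrix.of fun i i' => (μ[(fun ω' => F ω' i i') | m]) ω

/-- A sequence (indexed by the number `M` of transmit antennas) of non-centered
non-separable Gaussian MIMO models satisfying assumptions (A.1)–(A.3). -/
structure SeqModel (Ω : Type*) [MeasurableSpace Ω] (μ : Measure Ω) where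
  /-- `ρ > 0` is the fixed noise level (inverse SNR). -/
  ρ : ℝ
  hρ : 0 < ρ
  /-- number of receive antennas as a function of `M` -/
  N : ℕ → ℕ
  hN : Tendsto N atTop atTop
  /-- LoS components -/
  A : ∀ M : ℕ, Matrix (Fin (N M)) (Fin M) ℂ
  /-- variance profiles -/
  S : ∀ M : ℕ, Matrix (Fin (N M)) (Fin M) ℝ
  /-- random matrices -/
  X : ∀ M : ℕ, Ω → Matrix (Fin (N M)) (Fin M) ℂ
  measX : ∀ M i j, Measurable fun ω => X M ω i j
  gaussX : ∀ M : ℕ, 1 ≤ M → IIDcgauss μ (X M) (M : ℝ≥0)⁻¹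
  /-- (A.1) -/
  c₁ : ℝ
  c₂ : ℝ
  hc₁ : 0 < c₁
  hA1 : ∀ᶠ M : ℕ in atTop, c₁ ≤ (M : ℝ) / (N M : ℝ) ∧ (M : ℝ) / (N M : ℝ) ≤ c₂
  /-- (A.2) -/
  σmin : ℝ
  σmax : ℝ
  hσmin : 0 < σmin
  hA2 : ∀ M i j, σmin ≤ S M i j ∧ S M i j ≤ σmax
  /-- (A.3) -/
  amax : ℝ
  hA3 : ∀ M, specNorm (A M) ≤ amax

variable {μ : Measure Ω}

/-- The random channel of the `M`-th model. -/
def SeqModel.H (m : SeqModel Ω μ) (M : ℕ) (ω : Ω) : Matrix (Fin (m.N M)) (Fin M) ℂ :=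
  chan (m.A M) (m.S M) (m.X M ω)

/-- The mutual information of the `M`-th model. -/
def SeqModel.C (m : SeqModel Ω μ) (M : ℕ) (ω : Ω) : ℝ := MI m.ρ (m.H M ω)

/-- The martingale increment `γ_j = E_j[log(1+ζ_j)] − E_{j+1}[log(1+ζ_j)]`. -/
def SeqModel.gamma (m : SeqModel Ω μ) (M : ℕ) (j : Fin M) : Ω → ℝ := fun ω =>
  ((μ[(fun ω' => Real.log (1 + zeta m.ρ (m.A M) (m.S M) (m.H M ω') j)) |
      colSigma (m.X M) (j : ℕ)]) ω) -
  ((μ[(fun ω' => Real.log (1 + zeta m.ρ (m.A M) (m.S M) (m.H M ω') j)) |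
      colSigma (m.X M) ((j : ℕ) + 1)]) ω)

end HoloMIMO

/-! Deleting the column `h` of `H` is a rank-one update: `ρ + H Hᴴ = B + h hᴴ` with
`B = ρ + H_j H_jᴴ`. By Sherman–Morrison, `Q - Q_j = -(1 + t)⁻¹ q qᴴ` where `q = Q_j h` and
`t = hᴴ Q_j h ≥ 0`, so `|Tr Ψ(Q - Q_j)| = |qᴴ Ψ q| / (1 + t) ≤ ‖Ψ‖ ‖q‖² / (1 + t)`.
Since `B q = h`, also `t = qᴴ B q ≥ ρ ‖q‖²`, and the bound is `‖Ψ‖ t / (ρ (1 + t)) ≤ ‖Ψ‖ / ρ`. -/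

namespace Matrix

variable {n : Type*} [Fintype n] [DecidableEq n]

theorem inv_add_vecMulVec_sub_inv {K : Type*} [Field K] {B : Matrix n n K} (hB : IsUnit B.det)
    (u v : n → K) (hc : 1 + v ⬝ᵥ B⁻¹ *ᵥ u ≠ 0) :
    (B + vecMulVec u v)⁻¹ - B⁻¹ =
      -(1 + v ⬝ᵥ B⁻¹ *ᵥ u)⁻¹ • vecMulVec (B⁻¹ *ᵥ u) (v ᵥ* B⁻¹) := by
  rw [sub_eq_iff_eq_add']
  refine inv_eq_right_inv ?_
  have hBu : B *ᵥ (B⁻¹ *ᵥ u) = u := by rw [mulVec_mulVec, mul_nonsing_inv _ hB, one_mulVec]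
  rw [add_mul, mul_add, mul_add, mul_nonsing_inv _ hB, mul_smul_comm, mul_smul_comm,
    mul_vecMulVec, hBu, vecMulVec_mul, vecMulVec_mul_vecMulVec, vecMulVec_smul]
  set c := v ⬝ᵥ B⁻¹ *ᵥ u
  have hcoeff : -(1 + c)⁻¹ + (1 + -(1 + c)⁻¹ * c) = 0 := by field_simp; ring
  calc _ = 1 + (-(1 + c)⁻¹ + (1 + -(1 + c)⁻¹ * c)) • vecMulVec u (v ᵥ* B⁻¹) := by module
    _ = 1 := by rw [hcoeff, zero_smul, add_zero]

omit [DecidableEq n] in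
theorem trace_mul_vecMulVec {R : Type*} [CommSemiring R] (A : Matrix n n R) (x y : n → R) :
    trace (A * vecMulVec x y) = y ⬝ᵥ A *ᵥ x := by
  rw [mul_vecMulVec, trace_vecMulVec, dotProduct_comm]

omit [Fintype n] in
theorem PosSemidef.posDef_smul_one_add {P : Matrix n n ℂ} (hP : P.PosSemidef) {ρ : ℝ}
    (hρ : 0 < ρ) : ((ρ : ℂ) • 1 + P).PosDef :=
  (PosDef.one.smul (by exact_mod_cast hρ)).add_posSemidef hP

theorem PosDef.trace_mul_inv_add_vecMulVec_sub_inv {B : Matrix n n ℂ} (hB : B.PosDef)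
    (Ψ : Matrix n n ℂ) (h : n → ℂ) :
    trace (Ψ * ((B + vecMulVec h (star h))⁻¹ - B⁻¹)) =
      -(1 + star h ⬝ᵥ B⁻¹ *ᵥ h)⁻¹ * (star (B⁻¹ *ᵥ h) ⬝ᵥ Ψ *ᵥ (B⁻¹ *ᵥ h)) := by
  have hc : 1 + star h ⬝ᵥ B⁻¹ *ᵥ h ≠ 0 :=
    (add_pos_of_pos_of_nonneg one_pos (hB.inv.posSemidef.dotProduct_mulVec_nonneg h)).ne'
  rw [inv_add_vecMulVec_sub_inv (isUnit_iff_ne_zero.2 hB.det_pos.ne') h _ hc, mul_smul_comm,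
    trace_smul, trace_mul_vecMulVec, smul_eq_mul, star_mulVec, hB.inv.isHermitian.eq]

theorem PosSemidef.mul_re_dotProduct_star_self_le {P : Matrix n n ℂ} (hP : P.PosSemidef)
    (ρ : ℝ) (x : n → ℂ) : ρ * (star x ⬝ᵥ x).re ≤ (star x ⬝ᵥ ((ρ : ℂ) • 1 + P) *ᵥ x).re := by
  have hPx := (Complex.nonneg_iff.1 (hP.dotProduct_mulVec_nonneg x)).1
  simp only [add_mulVec, smul_mulVec, one_mulVec, dotProduct_add, dotProduct_smul,
    smul_eq_mul, Complex.add_re, Complex.re_ofReal_mul]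
  linarith

end Matrix

namespace HoloMIMO

theorem norm_star_dotProduct_mulVec_le {N : ℕ} (Ψ : Matrix (Fin N) (Fin N) ℂ) (x : Fin N → ℂ) :
    ‖star x ⬝ᵥ Ψ *ᵥ x‖ ≤ specNorm Ψ * (star x ⬝ᵥ x).re := by
  set L := LinearMap.toContinuousLinearMap (Matrix.toEuclideanLin Ψ)
  set y := WithLp.toLp 2 x
  have hquad : star x ⬝ᵥ Ψ *ᵥ x = inner ℂ y (L y) := dotProduct_comm _ _
  have hnorm : (star x ⬝ᵥ x).re = ‖y‖ ^ 2 := by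
    rw [@norm_sq_eq_re_inner ℂ, dotProduct_comm]; rfl
  calc ‖star x ⬝ᵥ Ψ *ᵥ x‖ ≤ ‖y‖ * ‖L y‖ := hquad ▸ norm_inner_le_norm y (L y)
    _ ≤ ‖y‖ * (‖L‖ * ‖y‖) := by gcongr; exact L.le_opNorm y
    _ = specNorm Ψ * (star x ⬝ᵥ x).re := by rw [hnorm, specNorm]; ring

theorem norm_trace_mul_inv_add_vecMulVec_sub_inv_le {N : ℕ} {P : Matrix (Fin N) (Fin N) ℂ}
    (hP : P.PosSemidef) {ρ : ℝ} (hρ : 0 < ρ) (Ψ : Matrix (Fin N) (Fin N) ℂ) (h : Fin N → ℂ) :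
    ‖trace (Ψ * (((ρ : ℂ) • 1 + P + vecMulVec h (star h))⁻¹ - ((ρ : ℂ) • 1 + P)⁻¹))‖ ≤
      specNorm Ψ / ρ := by
  set B := (ρ : ℂ) • 1 + P
  have hB : B.PosDef := hP.posDef_smul_one_add hρ
  set q := B⁻¹ *ᵥ h
  set t := star h ⬝ᵥ q
  have ht : star q ⬝ᵥ B *ᵥ q = t := by
    rw [mulVec_mulVec, mul_nonsing_inv _ (isUnit_iff_ne_zero.2 hB.det_pos.ne'), one_mulVec,
      star_mulVec, hB.inv.isHermitian.eq, ← dotProduct_mulVec]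
  have hρs : ρ * (star q ⬝ᵥ q).re ≤ t.re := ht ▸ hP.mul_re_dotProduct_star_self_le ρ q
  have ht0 : 0 ≤ t := hB.inv.posSemidef.dotProduct_mulVec_nonneg h
  have h1t : 0 < 1 + t.re := by linarith [(Complex.nonneg_iff.1 ht0).1]
  have hnorm : ‖1 + t‖ = 1 + t.re := by
    rw [← Complex.re_eq_norm.2 (add_nonneg zero_le_one ht0), Complex.add_re, Complex.one_re]
  have hS : 0 ≤ specNorm Ψ := norm_nonneg _
  have hΨq := mul_le_mul_of_nonneg_right (norm_star_dotProduct_mulVec_le Ψ q) hρ.le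
  have hρSs := mul_le_mul_of_nonneg_left hρs hS
  rw [hB.trace_mul_inv_add_vecMulVec_sub_inv, norm_mul, norm_neg, norm_inv, hnorm,
    inv_mul_le_iff₀ h1t, ← mul_div_assoc, le_div_iff₀ hρ]
  linarith

theorem mul_conjTranspose_eq_delCol_add_vecMulVec {N M : ℕ} (H : Matrix (Fin N) (Fin M) ℂ)
    (j : Fin M) :
    H * Hᴴ = delCol H j * (delCol H j)ᴴ + vecMulVec (colv H j) (star (colv H j)) := by
  ext i i'
  simp only [mul_apply, conjTranspose_apply, Matrix.add_apply, vecMulVec_apply, delCol, of_apply,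
    colv, Pi.star_apply]
  exact Fintype.sum_eq_add_sum_subtype_ne _ j |>.trans (add_comm _ _)

/-- rank-one perturbation bound for resolvents. -/
theorem stmt7_rank_one_perturbation
    {N M : ℕ} (ρ : ℝ) (hρ : 0 < ρ) (H : Matrix (Fin N) (Fin M) ℂ) (j : Fin M)
    (Ψ : Matrix (Fin N) (Fin N) ℂ) :
    ‖(Ψ * (Qmat ρ H - Qjmat ρ H j)).trace‖ ≤ specNorm Ψ / ρ := by
  rw [Qjmat, Qmat, Qmat, mul_conjTranspose_eq_delCol_add_vecMulVec H j, ← add_assoc]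
  exact norm_trace_mul_inv_add_vecMulVec_sub_inv_le (posSemidef_self_mul_conjTranspose _) hρ Ψ _

end HoloMIMO
end
end

section
/- Let T ∈ ℂ^{N×N} be Hermitian positive definite and let D₁, D₂ be N×N diagonal matrices with nonnegative entries. Then Tr(D₁ D₂) ≤ ‖T^{-1}‖² · Tr(D₁ T D₂ T), where ‖·‖ denotes the spectral norm. -/
noncomputable section

open MeasureTheory ProbabilityTheory Matrix Filter Finset
open scoped ENNReal NNReal Matrix BoundedContinuousFunction Topology ComplexOrder

namespace HoloMIMO

variable {Ω : Type*} [MeasurableSpace Ω]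

variable {μ : Measure Ω}

/-!
Both traces are explicit sums: `Tr(D₁D₂) = ∑ₖ d₁ₖ d₂ₖ` and, `T` being Hermitian,
`Tr(D₁TD₂T) = ∑ₖ ∑ₗ d₁ₖ d₂ₗ |Tₖₗ|² ≥ ∑ₖ d₁ₖ d₂ₖ |Tₖₖ|²`. Since `T⁻¹ ≤ ‖T⁻¹‖ • 1` and inversion
is antitone on positive invertible operators, `T ≥ ‖T⁻¹‖⁻¹ • 1`, so every diagonal entry of `T`
is at least `‖T⁻¹‖⁻¹`, i.e. `1 ≤ ‖T⁻¹‖² |Tₖₖ|²`.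
-/

section TraceInequality

open scoped MatrixOrder Matrix.Norms.L2Operator

lemma _root_.Ring.inverse_algebraMap {R A : Type*} [Field R] [Ring A] [Algebra R A] (r : R) :
    Ring.inverse (algebraMap R A r) = algebraMap R A r⁻¹ := by
  rcases eq_or_ne r 0 with rfl | hr
  · simp
  · exact Ring.inverse_unit (Units.map (algebraMap R A : R →* A) (Units.mk0 r hr))

lemma _root_.IsStrictlyPositive.one_le_norm_ringInverse_smul {A : Type*} [CStarAlgebra A]
    [PartialOrder A] [StarOrderedRing A] [Nontrivial A] {a : A} (ha : IsStrictlyPositive a) :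
    1 ≤ ‖Ring.inverse a‖ • a := by
  set c := ‖Ring.inverse a‖
  have hc : c ≠ 0 := norm_ne_zero_iff.mpr ha.isUnit.ringInverse.ne_zero
  have hinv : Ring.inverse a ≤ algebraMap ℝ A c := IsSelfAdjoint.le_algebraMap_norm_self
  have h := CStarAlgebra.ringInverse_le_ringInverse hinv
  rw [Ring.inverse_inverse ha.isUnit, Ring.inverse_algebraMap] at h
  calc (1 : A) = c • algebraMap ℝ A c⁻¹ := by
        rw [Algebra.smul_def, ← map_mul, mul_inv_cancel₀ hc, map_one]
    _ ≤ c • a := smul_le_smul_of_nonneg_left h (norm_nonneg _)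

lemma _root_.Matrix.PosDef.one_le_specNorm_inv_mul_re_diag {n : ℕ}
    {T : Matrix (Fin n) (Fin n) ℂ} (hT : T.PosDef) (k : Fin n) :
    1 ≤ specNorm T⁻¹ * (T k k).re := by
  have : Nonempty (Fin n) := ⟨k⟩
  have h := (isStrictlyPositive_iff_posDef.mpr hT).one_le_norm_ringInverse_smul
  rw [← nonsing_inv_eq_ringInverse] at h
  have hk := (Complex.nonneg_iff.mp ((Matrix.le_iff.mp h).diag_nonneg (i := k))).1
  simp only [Matrix.sub_apply, Matrix.smul_apply, one_apply_eq, Complex.sub_re, Complex.smul_re,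
    Complex.one_re] at hk
  -- `specNorm T⁻¹` is definitionally the L2 operator norm `‖T⁻¹‖` appearing in `hk`.
  exact sub_nonneg.mp hk

lemma _root_.Matrix.PosDef.one_le_specNorm_inv_sq_mul_normSq_diag {n : ℕ}
    {T : Matrix (Fin n) (Fin n) ℂ} (hT : T.PosDef) (k : Fin n) :
    1 ≤ specNorm T⁻¹ ^ 2 * Complex.normSq (T k k) := by
  rw [Complex.normSq_eq_norm_sq, ← mul_pow]
  refine one_le_pow₀ ((hT.one_le_specNorm_inv_mul_re_diag k).trans ?_)
  gcongr
  · exact norm_nonneg _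
  · exact Complex.re_le_norm _

lemma _root_.Matrix.re_trace_diagonal_mul_diagonal {ι : Type*} [Fintype ι] [DecidableEq ι]
    (d₁ d₂ : ι → ℝ) :
    ((diagonal (fun k => (d₁ k : ℂ)) * diagonal (fun k => (d₂ k : ℂ))).trace).re =
      ∑ k, d₁ k * d₂ k := by
  simp [diagonal_mul_diagonal, trace_diagonal, Complex.re_sum]

lemma _root_.Matrix.IsHermitian.re_trace_diagonal_mul_mul_diagonal_mul {ι : Type*} [Fintype ι]
    [DecidableEq ι] {T : Matrix ι ι ℂ} (hT : T.IsHermitian) (d₁ d₂ : ι → ℝ) :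
    ((diagonal (fun k => (d₁ k : ℂ)) * T * diagonal (fun k => (d₂ k : ℂ)) * T).trace).re =
      ∑ k, ∑ l, d₁ k * d₂ l * Complex.normSq (T k l) := by
  rw [trace, Complex.re_sum]
  refine Finset.sum_congr rfl fun k _ => ?_
  rw [diag_apply, mul_apply, Complex.re_sum]
  refine Finset.sum_congr rfl fun l _ => ?_
  have hterm : d₁ k * T k l * d₂ l * star (T k l) =
      ((d₁ k * d₂ l * Complex.normSq (T k l) : ℝ) : ℂ) := by
    rw [Complex.star_def]
    push_cast
    rw [← Complex.mul_conj]
    ring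
  rw [mul_diagonal, diagonal_mul, ← hT.apply l k, hterm, Complex.ofReal_re]

end TraceInequality

section Statements

variable [IsProbabilityMeasure μ]

/-- trace inequality `Tr(D₁D₂) ≤ ‖T⁻¹‖² Tr(D₁TD₂T)`. -/
theorem stmt15_trace_inequality
    {n : ℕ} (T : Matrix (Fin n) (Fin n) ℂ) (hT : T.PosDef)
    (d₁ d₂ : Fin n → ℝ) (hd₁ : ∀ k, 0 ≤ d₁ k) (hd₂ : ∀ k, 0 ≤ d₂ k) :
    ((Matrix.diagonal (fun k => (d₁ k : ℂ)) *
        Matrix.diagonal (fun k => (d₂ k : ℂ))).trace).re ≤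
      specNorm T⁻¹ ^ 2 *
        ((Matrix.diagonal (fun k => (d₁ k : ℂ)) * T *
          Matrix.diagonal (fun k => (d₂ k : ℂ)) * T).trace).re := by
  rw [re_trace_diagonal_mul_diagonal, hT.isHermitian.re_trace_diagonal_mul_mul_diagonal_mul,
    Finset.mul_sum]
  refine Finset.sum_le_sum fun k _ => ?_
  calc d₁ k * d₂ k
      ≤ (specNorm T⁻¹ ^ 2 * Complex.normSq (T k k)) * (d₁ k * d₂ k) :=
        le_mul_of_one_le_left (mul_nonneg (hd₁ k) (hd₂ k))
          (hT.one_le_specNorm_inv_sq_mul_normSq_diag k)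
    _ = specNorm T⁻¹ ^ 2 * (d₁ k * d₂ k * Complex.normSq (T k k)) := by ring
    _ ≤ specNorm T⁻¹ ^ 2 * ∑ l, d₁ k * d₂ l * Complex.normSq (T k l) := by
        gcongr
        exact Finset.single_le_sum (f := fun l => d₁ k * d₂ l * Complex.normSq (T k l))
          (fun l _ => mul_nonneg (mul_nonneg (hd₁ k) (hd₂ l)) (Complex.normSq_nonneg _))
          (Finset.mem_univ k)

end Statements

end HoloMIMO
end
end
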